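/- arXiv:2211.05223 — 6 statements merged into one kernel-verified Lean document; each statement's English description precedes it below -/
import Mathlib

section
/- Suppose the weighted directed graph 𝒢 on nodes {1,…,N} is strongly connected. Then there exists a vector θ = col(θ_1,…,θ_N) ∈ ℝ^N with ℒᵀθ = 0 (a left eigenvector of the Laplacian ℒ associated with the eigenvalue 0) such that every θ_i > 0, i.e., Θ = diag(θ_1,…,θ_N) is positive definite, and the symmetric matrix ℒ̂ = Θℒ + ℒᵀΘ is positive semidefinite. -/
open Matrix

/-- The Laplacian matrix of the weighted directed graph with adjacency weights `a`:
`l_{ii} = Σ_j a_{ij}` and `l_{ij} = -a_{ij}` for `i ≠ j`. -/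
noncomputable def laplacian {N : ℕ} (a : Fin N → Fin N → ℝ) : Matrix (Fin N) (Fin N) ℝ :=
  Matrix.of fun i j => if i = j then ∑ k, a i k else -(a i j)

/-- There is an edge from node `j` to node `i` iff `a i j > 0`; the graph is strongly
connected iff every node can be reached from every node along directed edges. -/
def StronglyConnected {N : ℕ} (a : Fin N → Fin N → ℝ) : Prop :=
  ∀ i j : Fin N, Relation.ReflTransGen (fun u v => 0 < a v u) i j

/-!
The row sums of `ℒ` vanish, so `ℒ` is singular and `ℒᵀ` has a nonzero kernel vector `θ`.
Replacing `θ` by `|θ|` keeps it in the kernel: by the triangle inequality every entry of `ℒᵀ|θ|`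
is `≤ 0`, while these entries sum to `(ℒ𝟙)ᵀ|θ| = 0`. The zero set of a nonnegative kernel vector
is closed under following edges, so strong connectivity makes `|θ|` positive.
Finally `Θℒ + ℒᵀΘ` is symmetric with nonpositive off-diagonal entries and zero row sums
(`ℒ𝟙 = 0`, `ℒᵀθ = 0`); the quadratic form of such a matrix is `½ Σᵢⱼ (-mᵢⱼ)(xᵢ - xⱼ)² ≥ 0`.
-/

open Finset

namespace Matrix

variable {ι R : Type*} [Fintype ι]

theorem sum_transpose_mulVec_eq_zero [CommSemiring R] {M : Matrix ι ι R} (hM : M *ᵥ 1 = 0)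
    (v : ι → R) : ∑ j, (Mᵀ *ᵥ v) j = 0 := by
  have h : (1 : ι → R) ⬝ᵥ Mᵀ *ᵥ v = 0 := by
    rw [dotProduct_mulVec, vecMul_transpose, hM, zero_dotProduct]
  simpa [dotProduct] using h

theorem two_mul_dotProduct_mulVec_eq_neg_sum [CommRing R] {M : Matrix ι ι R} (hsymm : M.IsSymm)
    (hM : M *ᵥ 1 = 0) (x : ι → R) :
    2 * (x ⬝ᵥ M *ᵥ x) = -∑ i, ∑ j, M i j * (x i - x j) ^ 2 := by
  have hrow : ∀ i, ∑ j, M i j = 0 := fun i => by simpa [mulVec, dotProduct] using congrFun hM i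
  have hcol : ∀ j, ∑ i, M i j = 0 := fun j => by
    simpa only [IsSymm.ext_iff.mp hsymm] using hrow j
  have expand : ∀ i j, M i j * (x i - x j) ^ 2
      = x i ^ 2 * M i j + x j ^ 2 * M i j - 2 * (x i * (M i j * x j)) := fun i j => by ring
  have hx2 : ∑ i, ∑ j, x j ^ 2 * M i j = 0 := by
    rw [sum_comm]
    simp only [← mul_sum, hcol, mul_zero, sum_const_zero]
  simp only [expand, sum_sub_distrib, sum_add_distrib, hx2, ← mul_sum, hrow, mul_zero,
    sum_const_zero]
  simp [dotProduct, mulVec, mul_sum]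

theorem posSemidef_of_isSymm_of_mulVec_one_eq_zero {M : Matrix ι ι ℝ} (hsymm : M.IsSymm)
    (hoff : ∀ i j, i ≠ j → M i j ≤ 0) (hM : M *ᵥ 1 = 0) : M.PosSemidef := by
  refine .of_dotProduct_mulVec_nonneg (isHermitian_iff_isSymm.mpr hsymm) fun x => ?_
  have hsum : ∑ i, ∑ j, M i j * (x i - x j) ^ 2 ≤ 0 :=
    sum_nonpos fun i _ => sum_nonpos fun j _ => by
      rcases eq_or_ne i j with rfl | hij
      · simp
      · exact mul_nonpos_of_nonpos_of_nonneg (hoff i j hij) (sq_nonneg _)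
  have := two_mul_dotProduct_mulVec_eq_neg_sum hsymm hM x
  rw [star_trivial]
  linarith

variable [DecidableEq ι]

theorem isSymm_diagonal_mul_add_transpose_mul_diagonal [CommSemiring R] (θ : ι → R)
    (L : Matrix ι ι R) :
    (diagonal θ * L + Lᵀ * diagonal θ).IsSymm := by
  simpa [transpose_mul] using isSymm_add_transpose_self (diagonal θ * L)

theorem diagonal_mul_add_transpose_mul_diagonal_mulVec_one [CommSemiring R] {θ : ι → R}
    {L : Matrix ι ι R} (hL : L *ᵥ 1 = 0) (hθ : Lᵀ *ᵥ θ = 0) :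
    (diagonal θ * L + Lᵀ * diagonal θ) *ᵥ 1 = 0 := by
  have hdiag : diagonal θ *ᵥ 1 = θ := by
    ext i
    simp [mulVec_diagonal]
  rw [add_mulVec, ← mulVec_mulVec, ← mulVec_mulVec, hL, mulVec_zero, hdiag, hθ, zero_add]

end Matrix

section Laplacian

variable {N : ℕ} {a : Fin N → Fin N → ℝ}

theorem laplacian_apply (ha_diag : ∀ i, a i i = 0) (i j : Fin N) :
    laplacian a i j = (if i = j then ∑ k, a i k else 0) - a i j := by
  by_cases h : i = j <;> simp [laplacian, h, ha_diag]

theorem laplacian_mulVec_one (ha_diag : ∀ i, a i i = 0) : laplacian a *ᵥ 1 = 0 := by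
  ext i
  simp [mulVec, dotProduct, laplacian_apply ha_diag]

theorem laplacian_transpose_mulVec_apply (ha_diag : ∀ i, a i i = 0) (θ : Fin N → ℝ)
    (j : Fin N) :
    ((laplacian a)ᵀ *ᵥ θ) j = (∑ k, a j k) * θ j - ∑ i, a i j * θ i := by
  simp [mulVec, dotProduct, laplacian_apply ha_diag, sub_mul, ite_mul]

theorem laplacian_diagonal_mul_add_transpose_mul_diagonal_apply_of_ne (θ : Fin N → ℝ)
    {i j : Fin N} (hij : i ≠ j) :
    (diagonal θ * laplacian a + (laplacian a)ᵀ * diagonal θ) i j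
      = -(θ i * a i j + θ j * a j i) := by
  simp [laplacian, hij, Ne.symm hij]
  ring

theorem exists_ne_zero_laplacian_transpose_mulVec_eq_zero [NeZero N]
    (ha_diag : ∀ i, a i i = 0) :
    ∃ θ ≠ 0, (laplacian a)ᵀ *ᵥ θ = 0 := by
  have hdet : (laplacian a).det = 0 :=
    exists_mulVec_eq_zero_iff.mp ⟨1, one_ne_zero, laplacian_mulVec_one ha_diag⟩
  exact exists_mulVec_eq_zero_iff.mpr (by rwa [det_transpose])

theorem laplacian_transpose_mulVec_abs_eq_zero (ha_nonneg : ∀ i j, 0 ≤ a i j)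
    (ha_diag : ∀ i, a i i = 0) {θ : Fin N → ℝ} (hθ : (laplacian a)ᵀ *ᵥ θ = 0) :
    (laplacian a)ᵀ *ᵥ |θ| = 0 := by
  have hle : ∀ j, ((laplacian a)ᵀ *ᵥ |θ|) j ≤ 0 := fun j => by
    have h := congrFun hθ j
    rw [laplacian_transpose_mulVec_apply ha_diag, Pi.zero_apply, sub_eq_zero] at h
    rw [laplacian_transpose_mulVec_apply ha_diag, sub_nonpos]
    calc (∑ k, a j k) * |θ| j = |∑ i, a i j * θ i| := by
          rw [← h, abs_mul, abs_of_nonneg (sum_nonneg fun k _ => ha_nonneg j k), Pi.abs_apply]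
      _ ≤ ∑ i, |a i j * θ i| := abs_sum_le_sum_abs _ _
      _ = ∑ i, a i j * |θ| i := by simp [abs_mul, abs_of_nonneg (ha_nonneg _ _)]
  ext j
  exact (sum_eq_zero_iff_of_nonpos fun j _ => hle j).mp
    (sum_transpose_mulVec_eq_zero (laplacian_mulVec_one ha_diag) _) j (mem_univ j)

theorem eq_zero_of_laplacian_transpose_mulVec_eq_zero (ha_nonneg : ∀ i j, 0 ≤ a i j)
    (ha_diag : ∀ i, a i i = 0) {θ : Fin N → ℝ} (hθ_nonneg : 0 ≤ θ)
    (hθ : (laplacian a)ᵀ *ᵥ θ = 0) {u v : Fin N} (hu : θ u = 0) (huv : 0 < a v u) : θ v = 0 := by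
  have h := congrFun hθ u
  rw [laplacian_transpose_mulVec_apply ha_diag, Pi.zero_apply, hu, mul_zero, zero_sub,
    neg_eq_zero] at h
  have hvu := (sum_eq_zero_iff_of_nonneg fun i _ => mul_nonneg (ha_nonneg i u) (hθ_nonneg i)).mp
    h v (mem_univ v)
  exact (mul_eq_zero.mp hvu).resolve_left huv.ne'

theorem pos_of_laplacian_transpose_mulVec_eq_zero (ha_nonneg : ∀ i j, 0 ≤ a i j)
    (ha_diag : ∀ i, a i i = 0) (hsc : StronglyConnected a) {θ : Fin N → ℝ} (hθ_nonneg : 0 ≤ θ)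
    (hθ_ne : θ ≠ 0) (hθ : (laplacian a)ᵀ *ᵥ θ = 0) (i : Fin N) : 0 < θ i := by
  by_contra! hi
  refine hθ_ne (funext fun j => ?_)
  induction hsc i j with
  | refl => exact le_antisymm hi (hθ_nonneg i)
  | tail _ huv ih =>
    exact eq_zero_of_laplacian_transpose_mulVec_eq_zero ha_nonneg ha_diag hθ_nonneg hθ ih huv

theorem exists_pos_laplacian_transpose_mulVec_eq_zero (ha_nonneg : ∀ i j, 0 ≤ a i j)
    (ha_diag : ∀ i, a i i = 0) (hsc : StronglyConnected a) :
    ∃ θ : Fin N → ℝ, (∀ i, 0 < θ i) ∧ (laplacian a)ᵀ *ᵥ θ = 0 := by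
  rcases N.eq_zero_or_pos with rfl | hN
  · exact ⟨1, fun i => i.elim0, Subsingleton.elim _ _⟩
  have : NeZero N := ⟨hN.ne'⟩
  obtain ⟨θ, hθ_ne, hθ⟩ := exists_ne_zero_laplacian_transpose_mulVec_eq_zero ha_diag
  have habs := laplacian_transpose_mulVec_abs_eq_zero ha_nonneg ha_diag hθ
  have habs_ne : |θ| ≠ 0 := fun h => hθ_ne (funext fun i => abs_eq_zero.mp (congrFun h i))
  exact ⟨|θ|, pos_of_laplacian_transpose_mulVec_eq_zero ha_nonneg ha_diag hsc (abs_nonneg θ)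
    habs_ne habs, habs⟩

end Laplacian

/-- if the weighted digraph is strongly connected, there is a left
eigenvector `θ` of the Laplacian for eigenvalue `0`, with all entries positive, such that
`Θℒ + ℒᵀΘ` is positive semidefinite. -/
theorem stmt0 {N : ℕ} (a : Fin N → Fin N → ℝ)
    (ha_nonneg : ∀ i j, 0 ≤ a i j) (ha_diag : ∀ i, a i i = 0)
    (hsc : StronglyConnected a) :
    ∃ θ : Fin N → ℝ, (∀ i, 0 < θ i) ∧
      (laplacian a)ᵀ.mulVec θ = 0 ∧
      (Matrix.diagonal θ * laplacian a + (laplacian a)ᵀ * Matrix.diagonal θ).PosSemidef := by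
  obtain ⟨θ, hθ_pos, hθ⟩ := exists_pos_laplacian_transpose_mulVec_eq_zero ha_nonneg ha_diag hsc
  refine ⟨θ, hθ_pos, hθ, posSemidef_of_isSymm_of_mulVec_one_eq_zero
    (isSymm_diagonal_mul_add_transpose_mul_diagonal θ _) (fun i j hij => ?_)
    (diagonal_mul_add_transpose_mul_diagonal_mulVec_one (laplacian_mulVec_one ha_diag) hθ)⟩
  rw [laplacian_diagonal_mul_add_transpose_mul_diagonal_apply_of_ne θ hij, neg_nonpos]
  exact add_nonneg (mul_nonneg (hθ_pos i).le (ha_nonneg i j))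
    (mul_nonneg (hθ_pos j).le (ha_nonneg j i))
end

section
/- Let Ā, H ∈ ℝ^{m×m}, χ > 0, κ ≥ ‖H‖, and let P ∈ ℝ^{m×m} be symmetric positive definite such that the symmetric block matrix [[ĀᵀP + PĀ + (1/χ)ĀᵀĀ, PH],[HᵀP, −χI_m]] is negative definite. Let λ ∈ (0,1), T > 0, and let φ : [0,T] → ℝ be differentiable with φ'(τ) = −2κφ(τ) − χ(φ(τ)² + 1) and λ ≤ φ(τ) ≤ λ^{−1} for all τ ∈ [0,T]. Then there exists ρ* > 0, depending only on Ā, H, P, χ, κ, λ, such that for every pair of differentiable functions x, e : [0,T] → ℝ^m satisfying ẋ(t) = Āx(t) + He(t) and ė(t) = −ẋ(t), the function U(t) = x(t)ᵀPx(t) + φ(t)e(t)ᵀe(t) satisfies U̇(t) ≤ −ρ* U(t) for all t ∈ [0,T]. -/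
open Matrix
open scoped Matrix.Norms.L2Operator

/-! Write `z = (x, e)`. The product rule and the differential equation of the clock `φ` make
`U̇` a quadratic expression in `z`; Young's inequality `-2φ eᵀĀx ≤ χφ²|e|² + χ⁻¹|Āx|²` and
`-eᵀHe ≤ ‖H‖|e|² ≤ κ|e|²` bound it by `zᵀMz`, where `M` is the block matrix of the LMI.
Negative definiteness of `M` gives `zᵀMz ≤ -α|z|²` for some `α > 0` (compactness of the unit
sphere), while `U ≤ max(‖P‖, λ⁻¹)|z|²`, so `ρ* = α / max(‖P‖, λ⁻¹)` works. -/

namespace Matrix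

variable {n : Type*} [Fintype n]

theorem dotProduct_self_nonneg {R : Type*} [Ring R] [LinearOrder R] [IsStrictOrderedRing R]
    (v : n → R) : 0 ≤ v ⬝ᵥ v :=
  Fintype.sum_nonneg fun i => mul_self_nonneg (v i)

theorem dotProduct_self_eq_norm_sq (v : n → ℝ) : v ⬝ᵥ v = ‖WithLp.toLp 2 v‖ ^ 2 := by
  rw [EuclideanSpace.real_norm_sq_eq]
  simp [dotProduct, sq]

theorem two_mul_dotProduct_le {c : ℝ} (hc : 0 < c) (v w : n → ℝ) :
    2 * (v ⬝ᵥ w) ≤ c * (v ⬝ᵥ v) + c⁻¹ * (w ⬝ᵥ w) := by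
  have h := dotProduct_self_nonneg (c • v - w)
  simp only [sub_dotProduct, dotProduct_sub, smul_dotProduct, dotProduct_smul, smul_eq_mul,
    dotProduct_comm w v] at h
  have key : c * (v ⬝ᵥ v) + c⁻¹ * (w ⬝ᵥ w) - 2 * (v ⬝ᵥ w) =
      c⁻¹ * (c * (c * (v ⬝ᵥ v) - v ⬝ᵥ w) - (c * (v ⬝ᵥ w) - w ⬝ᵥ w)) := by
    field_simp; ring
  rw [← sub_nonneg, key]
  exact mul_nonneg (inv_nonneg.2 hc.le) h

theorem sumElim_dotProduct_fromBlocks_mulVec_sumElim {R : Type*} [CommSemiring R]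
    (A B C D : Matrix n n R) (u w : n → R) :
    Sum.elim u w ⬝ᵥ fromBlocks A B C D *ᵥ Sum.elim u w =
      u ⬝ᵥ A *ᵥ u + u ⬝ᵥ B *ᵥ w + (w ⬝ᵥ C *ᵥ u + w ⬝ᵥ D *ᵥ w) := by
  simp only [fromBlocks_mulVec, Sum.elim_comp_inl, Sum.elim_comp_inr, sumElim_dotProduct_sumElim,
    dotProduct_add]

theorem abs_dotProduct_mulVec_le_l2_opNorm_mul [DecidableEq n] (A : Matrix n n ℝ) (v : n → ℝ) :
    |v ⬝ᵥ A *ᵥ v| ≤ ‖A‖ * (v ⬝ᵥ v) := by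
  have hinner : v ⬝ᵥ A *ᵥ v =
      inner ℝ (WithLp.toLp 2 v) ((EuclideanSpace.equiv n ℝ).symm (A *ᵥ v)) := by
    simp [PiLp.inner_apply, dotProduct, mul_comm]
  rw [hinner, dotProduct_self_eq_norm_sq, sq, ← mul_assoc, mul_comm ‖A‖]
  exact (abs_real_inner_le_norm _ _).trans
    (mul_le_mul_of_nonneg_left (A.l2_opNorm_mulVec _) (norm_nonneg _)) |>.trans_eq (by ring)

theorem PosDef.exists_pos_mul_dotProduct_self_le {Q : Matrix n n ℝ} (hQ : Q.PosDef) :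
    ∃ α, 0 < α ∧ ∀ v : n → ℝ, α * (v ⬝ᵥ v) ≤ v ⬝ᵥ Q *ᵥ v := by
  rcases isEmpty_or_nonempty n with hn | hn
  · exact ⟨1, one_pos, fun v => by simp [dotProduct]⟩
  let q : EuclideanSpace ℝ n → ℝ := fun x => x.ofLp ⬝ᵥ Q *ᵥ x.ofLp
  have hq : Continuous q := by unfold q; fun_prop
  have hq_smul (c : ℝ) (x : EuclideanSpace ℝ n) : q (c • x) = c ^ 2 * q x := by
    simp only [q, WithLp.ofLp_smul, mulVec_smul, smul_dotProduct, dotProduct_smul, smul_eq_mul]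
    ring
  obtain ⟨x₀, hx₀, hmin⟩ := (isCompact_sphere (0 : EuclideanSpace ℝ n) 1).exists_isMinOn
    (NormedSpace.sphere_nonempty.2 zero_le_one) hq.continuousOn
  have hx₀0 : x₀.ofLp ≠ 0 := by
    simpa using ne_zero_of_mem_unit_sphere ⟨x₀, hx₀⟩
  refine ⟨q x₀, hQ.dotProduct_mulVec_pos hx₀0, fun v => ?_⟩
  rcases eq_or_ne v 0 with rfl | hv
  · simp
  set x := WithLp.toLp 2 v
  have hx : 0 < ‖x‖ := by simpa [x] using hv
  have h : q x₀ ≤ q (‖x‖⁻¹ • x) := hmin (by simp [norm_smul, hx.ne'])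
  rw [hq_smul] at h
  rw [dotProduct_self_eq_norm_sq]
  calc q x₀ * ‖x‖ ^ 2 ≤ ‖x‖⁻¹ ^ 2 * q x * ‖x‖ ^ 2 := by gcongr
    _ = v ⬝ᵥ Q *ᵥ v := by field_simp; rfl

end Matrix

section Calculus

variable {n : Type*} [Fintype n] {s : Set ℝ} {t : ℝ}

theorem HasDerivWithinAt.dotProduct {f g : ℝ → n → ℝ} {f' g' : n → ℝ}
    (hf : HasDerivWithinAt f f' s t) (hg : HasDerivWithinAt g g' s t) :
    HasDerivWithinAt (fun u => f u ⬝ᵥ g u) (f' ⬝ᵥ g t + f t ⬝ᵥ g') s t := by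
  simp only [_root_.dotProduct, ← Finset.sum_add_distrib]
  exact HasDerivWithinAt.fun_sum fun i _ =>
    (hasDerivWithinAt_pi.1 hf i).mul (hasDerivWithinAt_pi.1 hg i)

theorem HasDerivWithinAt.mulVec {m : Type*} (M : Matrix m n ℝ) {f : ℝ → n → ℝ} {f' : n → ℝ}
    (hf : HasDerivWithinAt f f' s t) :
    HasDerivWithinAt (fun u => M *ᵥ f u) (M *ᵥ f') s t :=
  hasDerivWithinAt_pi.2 fun i => by
    simp only [Matrix.mulVec, _root_.dotProduct]
    exact HasDerivWithinAt.fun_sum fun j _ => (hasDerivWithinAt_pi.1 hf j).const_mul (M i j)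

end Calculus

section Lyapunov

variable {n : Type*} [Fintype n] [DecidableEq n]

theorem lyapunov_derivative_le_lmi_form (A H P : Matrix n n ℝ) {χ κ p : ℝ} (hχ : 0 < χ)
    (hκ : ‖H‖ ≤ κ) (hp : 0 ≤ p) (u w : n → ℝ) :
    (A *ᵥ u + H *ᵥ w) ⬝ᵥ P *ᵥ u + u ⬝ᵥ P *ᵥ (A *ᵥ u + H *ᵥ w) +
        ((-2 * κ * p - χ * (p ^ 2 + 1)) * (w ⬝ᵥ w) +
          p * (-(A *ᵥ u + H *ᵥ w) ⬝ᵥ w + w ⬝ᵥ -(A *ᵥ u + H *ᵥ w))) ≤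
      Sum.elim u w ⬝ᵥ fromBlocks (Aᵀ * P + P * A + (1 / χ) • (Aᵀ * A)) (P * H)
        (Hᵀ * P) (-(χ • 1)) *ᵥ Sum.elim u w := by
  have young := two_mul_dotProduct_le hχ (-(p • w)) (A *ᵥ u)
  have hH : -(w ⬝ᵥ H *ᵥ w) ≤ κ * (w ⬝ᵥ w) :=
    (neg_le_abs _).trans <| (abs_dotProduct_mulVec_le_l2_opNorm_mul H w).trans <|
      mul_le_mul_of_nonneg_right hκ (dotProduct_self_nonneg w)
  rw [sumElim_dotProduct_fromBlocks_mulVec_sumElim]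
  simp only [add_mulVec, mulVec_add, smul_mulVec, ← mulVec_mulVec, neg_mulVec, one_mulVec,
    dotProduct_add, add_dotProduct, dotProduct_neg, neg_dotProduct, dotProduct_smul,
    smul_dotProduct, smul_eq_mul, dotProduct_mulVec _ (Aᵀ), dotProduct_mulVec _ (Hᵀ),
    vecMul_transpose, dotProduct_comm (A *ᵥ u) w, dotProduct_comm (H *ᵥ w) w, one_div] at young ⊢
  linarith [mul_le_mul_of_nonneg_left hH hp]

theorem lyapunov_le_max_mul_dotProduct_self (P : Matrix n n ℝ) {p q : ℝ} (hpq : p ≤ q)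
    (u w : n → ℝ) :
    u ⬝ᵥ P *ᵥ u + p * (w ⬝ᵥ w) ≤ max ‖P‖ q * (u ⬝ᵥ u + w ⬝ᵥ w) := by
  have hu := dotProduct_self_nonneg u
  have hw := dotProduct_self_nonneg w
  have hP := (le_abs_self _).trans (abs_dotProduct_mulVec_le_l2_opNorm_mul P u)
  nlinarith [le_max_left ‖P‖ q, le_max_right ‖P‖ q]

end Lyapunov

theorem stmt5_general {m : ℕ} (Abar H P : Matrix (Fin m) (Fin m) ℝ)
    (χ κ : ℝ) (hχ : 0 < χ) (hκ : ‖H‖ ≤ κ)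
    (hLMI : (-(Matrix.fromBlocks
        (Abarᵀ * P + P * Abar + (1 / χ) • (Abarᵀ * Abar)) (P * H)
        (Hᵀ * P) (-(χ • (1 : Matrix (Fin m) (Fin m) ℝ))))).PosDef)
    (lam T : ℝ) (hlam : lam ∈ Set.Ioo (0:ℝ) 1) (hT : 0 < T)
    (φ : ℝ → ℝ)
    (hφderiv : ∀ τ ∈ Set.Icc (0:ℝ) T,
      HasDerivWithinAt φ (-2 * κ * φ τ - χ * ((φ τ) ^ 2 + 1)) (Set.Icc (0:ℝ) T) τ)
    (hφbound : ∀ τ ∈ Set.Icc (0:ℝ) T, lam ≤ φ τ ∧ φ τ ≤ lam⁻¹) :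
    ∃ ρ : ℝ, 0 < ρ ∧
      ∀ x e : ℝ → Fin m → ℝ,
        (∀ t ∈ Set.Icc (0:ℝ) T,
          HasDerivWithinAt x (Abar.mulVec (x t) + H.mulVec (e t)) (Set.Icc (0:ℝ) T) t) →
        (∀ t ∈ Set.Icc (0:ℝ) T,
          HasDerivWithinAt e (-(Abar.mulVec (x t) + H.mulVec (e t))) (Set.Icc (0:ℝ) T) t) →
        ∀ t ∈ Set.Icc (0:ℝ) T, ∀ d : ℝ,
          HasDerivWithinAt (fun s => x s ⬝ᵥ P.mulVec (x s) + φ s * (e s ⬝ᵥ e s)) d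
            (Set.Icc (0:ℝ) T) t →
          d ≤ -ρ * (x t ⬝ᵥ P.mulVec (x t) + φ t * (e t ⬝ᵥ e t)) := by
  obtain ⟨α, hα, hαM⟩ := hLMI.exists_pos_mul_dotProduct_self_le
  set C := max ‖P‖ lam⁻¹
  have hC : 0 < C := lt_max_of_lt_right (inv_pos.2 hlam.1)
  have hρ : 0 < α / C := div_pos hα hC
  refine ⟨α / C, hρ, fun x e hx he t ht d hd => ?_⟩
  obtain rfl := (uniqueDiffOn_Icc hT t ht).eq_deriv _ hd
    (((hx t ht).dotProduct ((hx t ht).mulVec P)).add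
      ((hφderiv t ht).mul ((he t ht).dotProduct (he t ht))))
  have hφpos : 0 ≤ φ t := (hlam.1.trans_le (hφbound t ht).1).le
  have hderiv := lyapunov_derivative_le_lmi_form Abar H P hχ hκ hφpos (x t) (e t)
  have hmargin := hαM (Sum.elim (x t) (e t))
  rw [neg_mulVec, dotProduct_neg, sumElim_dotProduct_sumElim] at hmargin
  have hU := lyapunov_le_max_mul_dotProduct_self P (hφbound t ht).2 (x t) (e t)
  calc _ ≤ -α * (x t ⬝ᵥ x t + e t ⬝ᵥ e t) := by linarith
    _ = -(α / C) * (C * (x t ⬝ᵥ x t + e t ⬝ᵥ e t)) := by field_simp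
    _ ≤ _ := mul_le_mul_of_nonpos_left hU (neg_nonpos.2 hρ.le)

/-- given a strict block Lyapunov LMI certificate `P` and the
Carnevale–Teel clock function `φ`, the hybrid Lyapunov function
`U(t) = x(t)ᵀPx(t) + φ(t)e(t)ᵀe(t)` decays at a uniform exponential rate `ρ*` along all
trajectories of `ẋ = Āx + He`, `ė = −ẋ`. -/
theorem stmt5 {m : ℕ} (Abar H P : Matrix (Fin m) (Fin m) ℝ)
    (χ κ : ℝ) (hχ : 0 < χ) (hκ : ‖H‖ ≤ κ)
    (hPsymm : Pᵀ = P) (hP : P.PosDef)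
    (hLMI : (-(Matrix.fromBlocks
        (Abarᵀ * P + P * Abar + (1 / χ) • (Abarᵀ * Abar)) (P * H)
        (Hᵀ * P) (-(χ • (1 : Matrix (Fin m) (Fin m) ℝ))))).PosDef)
    (lam T : ℝ) (hlam : lam ∈ Set.Ioo (0:ℝ) 1) (hT : 0 < T)
    (φ : ℝ → ℝ)
    (hφderiv : ∀ τ ∈ Set.Icc (0:ℝ) T,
      HasDerivWithinAt φ (-2 * κ * φ τ - χ * ((φ τ) ^ 2 + 1)) (Set.Icc (0:ℝ) T) τ)
    (hφbound : ∀ τ ∈ Set.Icc (0:ℝ) T, lam ≤ φ τ ∧ φ τ ≤ lam⁻¹) :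
    ∃ ρ : ℝ, 0 < ρ ∧
      ∀ x e : ℝ → Fin m → ℝ,
        (∀ t ∈ Set.Icc (0:ℝ) T,
          HasDerivWithinAt x (Abar.mulVec (x t) + H.mulVec (e t)) (Set.Icc (0:ℝ) T) t) →
        (∀ t ∈ Set.Icc (0:ℝ) T,
          HasDerivWithinAt e (-(Abar.mulVec (x t) + H.mulVec (e t))) (Set.Icc (0:ℝ) T) t) →
        ∀ t ∈ Set.Icc (0:ℝ) T, ∀ d : ℝ,
          HasDerivWithinAt (fun s => x s ⬝ᵥ P.mulVec (x s) + φ s * (e s ⬝ᵥ e s)) d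
            (Set.Icc (0:ℝ) T) t →
          d ≤ -ρ * (x t ⬝ᵥ P.mulVec (x t) + φ t * (e t ⬝ᵥ e t)) :=
  stmt5_general Abar H P χ κ hχ hκ hLMI lam T hlam hT φ hφderiv hφbound
end

section
/- Let c_1, c_2 > 0 and 0 < h ≤ τ < c_1/c_2. Let U : [a, a+h] → ℝ be continuously differentiable with U(t) ≥ 0 for all t, U(a) > 0, and suppose that for all t ∈ [a, a+h], U̇(t) ≤ −c_1 U(t) + c_2 (t − a) √(U(t)) · √(max_{s∈[a,a+h]} U(s)). Then max_{s∈[a,a+h]} U(s) = U(a); i.e., U(t) ≤ U(a) for all t ∈ [a, a+h]. -/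
/-!
At a maximiser `t > a` of `U` the left difference quotients give `U̇(t) ≥ 0`. But there
`max U = U(t)`, so the hypothesis reads `U̇(t) ≤ (c₂ (t - a) - c₁) U(t)`, which is negative
because `t - a ≤ h ≤ τ < c₁ / c₂` and `U(t) ≥ U(a) > 0`. Hence the maximum sits at `a`.
-/

open Set

theorem IsMaxOn.csSup_image_eq {α β : Type*} [ConditionallyCompleteLattice β] {f : α → β}
    {s : Set α} {t : α} (ht : t ∈ s) (hmax : IsMaxOn f s t) : sSup (f '' s) = f t :=
  IsGreatest.csSup_eq ⟨mem_image_of_mem f ht, forall_mem_image.2 fun _ hx => hmax hx⟩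

theorem IsMaxOn.hasDerivWithinAt_Icc_nonneg {f : ℝ → ℝ} {f' a b t : ℝ}
    (hmax : IsMaxOn f (Icc a b) t) (hf : HasDerivWithinAt f f' (Icc a b) t)
    (ht : t ∈ Ioc a b) : 0 ≤ f' := by
  have hseg : segment ℝ t a ⊆ Icc a b := by
    rw [segment_symm, segment_eq_Icc ht.1.le]
    exact Icc_subset_Icc_right ht.2
  have hle : (a - t) * f' ≤ 0 := by
    simpa using hmax.localize.hasFDerivWithinAt_nonpos hf.hasFDerivWithinAt
      (sub_mem_posTangentConeAt_of_segment_subset hseg)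
  nlinarith [ht.1]

theorem isMaxOn_left_of_deriv_neg_at_isMaxOn {f f' : ℝ → ℝ} {a b : ℝ} (hab : a ≤ b)
    (hf : ∀ t ∈ Icc a b, HasDerivWithinAt f (f' t) (Icc a b) t)
    (hneg : ∀ t ∈ Ioc a b, IsMaxOn f (Icc a b) t → f' t < 0) :
    IsMaxOn f (Icc a b) a := by
  have hcont : ContinuousOn f (Icc a b) := fun t ht => (hf t ht).continuousWithinAt
  obtain ⟨t₀, ht₀, hmax⟩ := isCompact_Icc.exists_isMaxOn (nonempty_Icc.2 hab) hcont
  rcases ht₀.1.eq_or_lt with rfl | hlt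
  · exact hmax
  · have ht₀' : t₀ ∈ Ioc a b := ⟨hlt, ht₀.2⟩
    exact absurd (hmax.hasDerivWithinAt_Icc_nonneg (hf t₀ ht₀) ht₀')
      (hneg t₀ ht₀' hmax).not_ge

theorem stmt9_general (a h τ c₁ c₂ : ℝ) (hc₂ : 0 < c₂)
    (hh : 0 < h) (hhτ : h ≤ τ) (hτ : τ < c₁ / c₂)
    (U U' : ℝ → ℝ)
    (hderiv : ∀ t ∈ Set.Icc a (a + h), HasDerivWithinAt U (U' t) (Set.Icc a (a + h)) t)
    (hUa : 0 < U a)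
    (hineq : ∀ t ∈ Set.Icc a (a + h),
      U' t ≤ -c₁ * U t + c₂ * (t - a) * Real.sqrt (U t) *
        Real.sqrt (sSup (U '' Set.Icc a (a + h)))) :
    ∀ t ∈ Set.Icc a (a + h), U t ≤ U a := by
  refine isMaxOn_left_of_deriv_neg_at_isMaxOn (by linarith) hderiv fun t ht hmax => ?_
  have htIcc : t ∈ Icc a (a + h) := Ioc_subset_Icc_self ht
  have hUt : 0 < U t := hUa.trans_le (hmax (left_mem_Icc.2 (by linarith)))
  have hrate : c₂ * (t - a) < c₁ := by
    calc c₂ * (t - a) ≤ c₂ * τ := by gcongr; linarith [ht.2]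
      _ < c₁ := (lt_div_iff₀' hc₂).1 hτ
  calc U' t ≤ -c₁ * U t + c₂ * (t - a) * √(U t) * √(U t) := by
        simpa only [hmax.csSup_image_eq htIcc] using hineq t htIcc
    _ = (c₂ * (t - a) - c₁) * U t := by
        rw [mul_assoc _ √(U t), Real.mul_self_sqrt hUt.le]; ring
    _ < 0 := mul_neg_of_neg_of_pos (by linarith) hUt

/-- if `U ≥ 0` is continuously differentiable on `[a, a+h]` with `U(a) > 0`,
`0 < h ≤ τ < c₁/c₂`, and `U̇(t) ≤ −c₁U(t) + c₂(t−a)√(U(t))·√(max U)` on the interval, then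
the maximum of `U` over `[a, a+h]` is attained at `a`, i.e. `U(t) ≤ U(a)` on the interval. -/
theorem stmt9 (a h τ c₁ c₂ : ℝ) (hc₁ : 0 < c₁) (hc₂ : 0 < c₂)
    (hh : 0 < h) (hhτ : h ≤ τ) (hτ : τ < c₁ / c₂)
    (U U' : ℝ → ℝ)
    (hderiv : ∀ t ∈ Set.Icc a (a + h), HasDerivWithinAt U (U' t) (Set.Icc a (a + h)) t)
    (hcont : ContinuousOn U' (Set.Icc a (a + h)))
    (hnonneg : ∀ t ∈ Set.Icc a (a + h), 0 ≤ U t)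
    (hUa : 0 < U a)
    (hineq : ∀ t ∈ Set.Icc a (a + h),
      U' t ≤ -c₁ * U t + c₂ * (t - a) * Real.sqrt (U t) *
        Real.sqrt (sSup (U '' Set.Icc a (a + h)))) :
    ∀ t ∈ Set.Icc a (a + h), U t ≤ U a :=
  stmt9_general a h τ c₁ c₂ hc₂ hh hhτ hτ U U' hderiv hUa hineq
end

section
/- Let c_1, c_2 > 0 and 0 < h ≤ τ < c_1/c_2. Let U : [a, a+h] → ℝ be continuously differentiable with U(t) > 0 for all t ∈ [a, a+h], and suppose that for all t ∈ [a, a+h], U̇(t) ≤ −c_1 U(t) + c_2 τ √(U(t) · U(a)). Then U(a+h) ≤ ρ² U(a), where ρ = e^{−c_1 h/2}(1 − c_2τ/c_1) + c_2τ/c_1 satisfies 0 < ρ < 1. -/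
/-!
Substituting `V = √U` turns the differential inequality into the linear one
`V̇ ≤ -(c₁/2) V + (c₂τ/2) √(U a)`, since `U̇ / (2√U) ≤ -(c₁/2)√U + c₂τ√(U a)/2`.
Grönwall's inequality then bounds `V (a+h)` by the solution of the linear equation,
`e^{-c₁h/2} V a + (1 - e^{-c₁h/2}) (c₂τ/c₁) V a = ρ V a`, and squaring gives the claim.
-/

open Set Real

theorem le_gronwallBound_of_deriv_right_le {f f' : ℝ → ℝ} {δ K ε a b : ℝ}
    (hf : ContinuousOn f (Icc a b)) (hf' : ∀ x ∈ Ico a b, HasDerivWithinAt f (f' x) (Ici x) x)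
    (ha : f a ≤ δ) (bound : ∀ x ∈ Ico a b, f' x ≤ K * f x + ε) :
    ∀ x ∈ Icc a b, f x ≤ gronwallBound δ K ε (x - a) :=
  le_gronwallBound_of_liminf_deriv_right_le hf
    (fun x hx _r hr => (hf' x hx).liminf_right_slope_le hr) ha bound

theorem div_two_sqrt_le_of_le {u u' c d : ℝ} (hu : 0 < u) (h : u' ≤ -c * u + d * √u) :
    u' / (2 * √u) ≤ -(c / 2) * √u + d / 2 := by
  rw [div_le_iff₀ (mul_pos two_pos (sqrt_pos.mpr hu))]
  linear_combination h + c * mul_self_sqrt hu.le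

theorem sqrt_le_of_deriv_le_neg_mul_add_mul_sqrt {U U' : ℝ → ℝ} {a b c d : ℝ}
    (hab : a ≤ b) (hc : c ≠ 0)
    (hderiv : ∀ t ∈ Icc a b, HasDerivWithinAt U (U' t) (Icc a b) t)
    (hpos : ∀ t ∈ Icc a b, 0 < U t)
    (hineq : ∀ t ∈ Icc a b, U' t ≤ -c * U t + d * √(U t)) :
    √(U b) ≤ exp (-c * (b - a) / 2) * √(U a) + (1 - exp (-c * (b - a) / 2)) * (d / c) := by
  have hsqrt : ∀ t ∈ Icc a b,
      HasDerivWithinAt (fun s => √(U s)) (U' t / (2 * √(U t))) (Icc a b) t :=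
    fun t ht => (hderiv t ht).sqrt (hpos t ht).ne'
  have hright : ∀ t ∈ Ico a b,
      HasDerivWithinAt (fun s => √(U s)) (U' t / (2 * √(U t))) (Ici t) t :=
    fun t ht => (hsqrt t (Ico_subset_Icc_self ht)).mono_of_mem_nhdsWithin
      (Icc_mem_nhdsGE_of_mem ht)
  have hbound := le_gronwallBound_of_deriv_right_le (K := -(c / 2)) (ε := d / 2)
    (fun t ht => (hsqrt t ht).continuousWithinAt) hright le_rfl
    (fun t ht => div_two_sqrt_le_of_le (hpos t (Ico_subset_Icc_self ht))
      (hineq t (Ico_subset_Icc_self ht))) b ⟨hab, le_rfl⟩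
  rw [gronwallBound_of_K_ne_0 (neg_ne_zero.mpr (div_ne_zero hc two_ne_zero))] at hbound
  refine hbound.trans_eq ?_
  field_simp
  ring

theorem mul_one_sub_add_mem_Ioo {E m : ℝ} (hE : E ∈ Ioo 0 1) (hm : m ∈ Ico 0 1) :
    E * (1 - m) + m ∈ Ioo 0 1 := by
  obtain ⟨hE₀, hE₁⟩ := hE
  obtain ⟨hm₀, hm₁⟩ := hm
  constructor <;> nlinarith

theorem stmt10_general (a h τ c₁ c₂ : ℝ) (hc₁ : 0 < c₁) (hc₂ : 0 < c₂)
    (hh : 0 < h) (hhτ : h ≤ τ) (hτ : τ < c₁ / c₂)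
    (U U' : ℝ → ℝ)
    (hderiv : ∀ t ∈ Set.Icc a (a + h), HasDerivWithinAt U (U' t) (Set.Icc a (a + h)) t)
    (hpos : ∀ t ∈ Set.Icc a (a + h), 0 < U t)
    (hineq : ∀ t ∈ Set.Icc a (a + h),
      U' t ≤ -c₁ * U t + c₂ * τ * Real.sqrt (U t * U a)) :
    0 < Real.exp (-c₁ * h / 2) * (1 - c₂ * τ / c₁) + c₂ * τ / c₁ ∧
    Real.exp (-c₁ * h / 2) * (1 - c₂ * τ / c₁) + c₂ * τ / c₁ < 1 ∧
    U (a + h) ≤ (Real.exp (-c₁ * h / 2) * (1 - c₂ * τ / c₁) + c₂ * τ / c₁) ^ 2 * U a := by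
  have hUa : 0 < U a := hpos a ⟨le_rfl, by linarith⟩
  have hE : exp (-c₁ * h / 2) ∈ Ioo 0 1 := ⟨exp_pos _, exp_lt_one_iff.mpr (by nlinarith)⟩
  have hm : c₂ * τ / c₁ ∈ Ico 0 1 :=
    ⟨div_nonneg (mul_nonneg hc₂.le (by linarith)) hc₁.le,
      (div_lt_one hc₁).mpr (by linarith [(lt_div_iff₀ hc₂).mp hτ])⟩
  obtain ⟨hρ₀, hρ₁⟩ := mul_one_sub_add_mem_Ioo hE hm
  refine ⟨hρ₀, hρ₁, ?_⟩
  have hsqrt := sqrt_le_of_deriv_le_neg_mul_add_mul_sqrt (by linarith) hc₁.ne' hderiv hpos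
    (d := c₂ * τ * √(U a))
    (fun t ht => (hineq t ht).trans_eq (by rw [sqrt_mul (hpos t ht).le]; ring))
  rw [add_sub_cancel_left] at hsqrt
  have hρ : √(U (a + h)) ≤
      (exp (-c₁ * h / 2) * (1 - c₂ * τ / c₁) + c₂ * τ / c₁) * √(U a) :=
    hsqrt.trans_eq (by ring)
  calc U (a + h) ≤ ((exp (-c₁ * h / 2) * (1 - c₂ * τ / c₁) + c₂ * τ / c₁) * √(U a)) ^ 2 :=
        (sqrt_le_left (mul_nonneg hρ₀.le (sqrt_nonneg _))).mp hρ
    _ = (exp (-c₁ * h / 2) * (1 - c₂ * τ / c₁) + c₂ * τ / c₁) ^ 2 * U a := by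
        rw [mul_pow, sq_sqrt hUa.le]

/-- if `U > 0` is continuously differentiable on `[a, a+h]` with
`0 < h ≤ τ < c₁/c₂` and `U̇(t) ≤ −c₁U(t) + c₂τ√(U(t)U(a))`, then
`U(a+h) ≤ ρ²U(a)` where `ρ = e^{−c₁h/2}(1 − c₂τ/c₁) + c₂τ/c₁ ∈ (0,1)`. -/
theorem stmt10 (a h τ c₁ c₂ : ℝ) (hc₁ : 0 < c₁) (hc₂ : 0 < c₂)
    (hh : 0 < h) (hhτ : h ≤ τ) (hτ : τ < c₁ / c₂)
    (U U' : ℝ → ℝ)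
    (hderiv : ∀ t ∈ Set.Icc a (a + h), HasDerivWithinAt U (U' t) (Set.Icc a (a + h)) t)
    (hcont : ContinuousOn U' (Set.Icc a (a + h)))
    (hpos : ∀ t ∈ Set.Icc a (a + h), 0 < U t)
    (hineq : ∀ t ∈ Set.Icc a (a + h),
      U' t ≤ -c₁ * U t + c₂ * τ * Real.sqrt (U t * U a)) :
    0 < Real.exp (-c₁ * h / 2) * (1 - c₂ * τ / c₁) + c₂ * τ / c₁ ∧
    Real.exp (-c₁ * h / 2) * (1 - c₂ * τ / c₁) + c₂ * τ / c₁ < 1 ∧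
    U (a + h) ≤ (Real.exp (-c₁ * h / 2) * (1 - c₂ * τ / c₁) + c₂ * τ / c₁) ^ 2 * U a :=
  stmt10_general a h τ c₁ c₂ hc₁ hc₂ hh hhτ hτ U U' hderiv hpos hineq
end

section
/- Let x : ℕ → ℝ^m satisfy x(k+1) = Λ_k x(k) + g(k), where the matrices Λ_k ∈ ℝ^{m×m} satisfy sup_k ‖Λ_k‖ < ∞, and suppose there exist symmetric matrices P(k) ∈ ℝ^{m×m} and positive constants α_1, α_2, α_3 such that α_1 I ⪯ P(k) ⪯ α_2 I and Λ_kᵀP(k+1)Λ_k − P(k) ⪯ −α_3 I for all k. If g(k) → 0 as k → ∞, then x(k) → 0 as k → ∞. -/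
/-!
The Lyapunov function `V k = x(k)ᵀ P(k) x(k)` is comparable to `‖x k‖²`. For the unforced
system it contracts by the factor `1 - α₃ / α₂`; the input `g` enters only through the
Young-type inequality `(u + w)ᵀ P (u + w) ≤ (1 + s) uᵀ P u + (1 + s⁻¹) wᵀ P w`, so
`V (k + 1) ≤ ρ V k + C ‖g k‖²` with `ρ < 1`, and such a scalar recursion driven by a vanishing
input tends to zero.
-/

open Matrix Filter
open scoped Matrix.Norms.L2Operator Topology

/-- Multiplication of a Euclidean vector by a matrix, as a map between Euclidean spaces. -/
noncomputable def Matrix.mulVecE {m n : Type*} [Fintype n] (A : Matrix m n ℝ)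
    (v : EuclideanSpace ℝ n) : EuclideanSpace ℝ m :=
  (WithLp.equiv 2 (m → ℝ)).symm (A.mulVec ((WithLp.equiv 2 (n → ℝ)) v))

theorem EuclideanSpace.ofLp_dotProduct_ofLp_self {n : Type*} [Fintype n]
    (v : EuclideanSpace ℝ n) : v.ofLp ⬝ᵥ v.ofLp = ‖v‖ ^ 2 := by
  simp [EuclideanSpace.real_norm_sq_eq v, dotProduct, sq]

theorem tendsto_zero_of_le_mul_add {v u : ℕ → ℝ} {ρ : ℝ} (hρ : ρ < 1) (hv : ∀ k, 0 ≤ v k)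
    (hrec : ∀ k, v (k + 1) ≤ ρ * v k + u k) (hu : Tendsto u atTop (𝓝 0)) :
    Tendsto v atTop (𝓝 0) := by
  set r := max ρ 0
  have hr₀ : 0 ≤ r := le_max_right _ _
  have hr₁ : r < 1 := max_lt hρ one_pos
  have hrec' (k : ℕ) : v (k + 1) ≤ r * v k + u k := by
    linarith [hrec k, mul_le_mul_of_nonneg_right (le_max_left ρ 0) (hv k)]
  refine tendsto_order.2 ⟨fun a ha => .of_forall fun k => ha.trans_le (hv k), fun ε hε => ?_⟩
  obtain ⟨K, hK⟩ := eventually_atTop.1 <|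
    hu.eventually (gt_mem_nhds (show (0 : ℝ) < (1 - r) * ε / 2 by nlinarith))
  -- beyond `K` the excess of `v` over `ε / 2` contracts by the factor `r`
  have hexcess : ∀ k ≥ K, v k - ε / 2 ≤ r ^ (k - K) * v K := by
    refine Nat.le_induction (by simpa using (half_pos hε).le) fun k hk ih => ?_
    rw [Nat.sub_add_comm hk, pow_succ']
    nlinarith [hrec' k, hK k hk, mul_le_mul_of_nonneg_left ih hr₀]
  have hgeom : Tendsto (fun k => r ^ (k - K) * v K) atTop (𝓝 0) := by
    simpa using ((tendsto_pow_atTop_nhds_zero_of_lt_one hr₀ hr₁).comp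
      (tendsto_sub_atTop_nat K)).mul_const (v K)
  filter_upwards [eventually_ge_atTop K, hgeom.eventually (gt_mem_nhds (half_pos hε))]
    with k hk hk'
  linarith [hexcess k hk]

namespace Matrix

variable {n : Type*} [Fintype n]

theorem dotProduct_mulVec_le_of_posSemidef_sub {A B : Matrix n n ℝ} (h : (B - A).PosSemidef)
    (v : n → ℝ) : v ⬝ᵥ (A *ᵥ v) ≤ v ⬝ᵥ (B *ᵥ v) := by
  simpa [sub_mulVec] using h.dotProduct_mulVec_nonneg v

theorem PosSemidef.dotProduct_add_mulVec_add_le {A : Matrix n n ℝ} (hA : A.PosSemidef)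
    (u w : n → ℝ) {s : ℝ} (hs : 0 < s) :
    (u + w) ⬝ᵥ (A *ᵥ (u + w)) ≤ (1 + s) * (u ⬝ᵥ (A *ᵥ u)) + (1 + s⁻¹) * (w ⬝ᵥ (A *ᵥ w)) := by
  have h := hA.dotProduct_mulVec_nonneg (s • u - w)
  simp only [star_trivial, mulVec_add, mulVec_sub, mulVec_smul, add_dotProduct, dotProduct_add,
    sub_dotProduct, dotProduct_sub, smul_dotProduct, dotProduct_smul, smul_eq_mul] at h ⊢
  have hcross : u ⬝ᵥ (A *ᵥ w) + w ⬝ᵥ (A *ᵥ u) ≤ s * (u ⬝ᵥ (A *ᵥ u)) + s⁻¹ * (w ⬝ᵥ (A *ᵥ w)) := by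
    rw [← mul_le_mul_iff_of_pos_left hs, mul_add, mul_add, ← mul_assoc s s⁻¹,
      mul_inv_cancel₀ hs.ne', one_mul]
    linarith
  linarith

theorem dotProduct_transpose_mul_mul_mulVec (A Q : Matrix n n ℝ) (v : n → ℝ) :
    v ⬝ᵥ ((Aᵀ * Q * A) *ᵥ v) = (A *ᵥ v) ⬝ᵥ (Q *ᵥ (A *ᵥ v)) := by
  rw [← mulVec_mulVec, ← mulVec_mulVec, dotProduct_mulVec, vecMul_transpose]

variable [DecidableEq n]

theorem lyapunov_step {A P Q : Matrix n n ℝ} {α₂ α₃ s : ℝ} (hα₂ : 0 < α₂) (hα₃ : 0 ≤ α₃)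
    (hs : 0 < s) (hQ : Q.PosSemidef) (hQ₂ : (α₂ • 1 - Q).PosSemidef)
    (hP₂ : (α₂ • 1 - P).PosSemidef) (hA : (-(α₃ • 1) - (Aᵀ * Q * A - P)).PosSemidef)
    (v w : n → ℝ) :
    (A *ᵥ v + w) ⬝ᵥ (Q *ᵥ (A *ᵥ v + w)) ≤
      (1 + s) * (1 - α₃ / α₂) * (v ⬝ᵥ (P *ᵥ v)) + (1 + s⁻¹) * α₂ * (w ⬝ᵥ w) := by
  have hdecr : (A *ᵥ v) ⬝ᵥ (Q *ᵥ (A *ᵥ v)) ≤ (1 - α₃ / α₂) * (v ⬝ᵥ (P *ᵥ v)) := by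
    have hLyap := dotProduct_mulVec_le_of_posSemidef_sub hA v
    have hP := dotProduct_mulVec_le_of_posSemidef_sub hP₂ v
    simp only [sub_mulVec, neg_mulVec, smul_mulVec, one_mulVec, dotProduct_sub, dotProduct_neg,
      dotProduct_smul, smul_eq_mul, dotProduct_transpose_mul_mul_mulVec] at hLyap hP
    have : α₃ / α₂ * (v ⬝ᵥ (P *ᵥ v)) ≤ α₃ * (v ⬝ᵥ v) := by
      rw [div_mul_eq_mul_div, div_le_iff₀ hα₂]; nlinarith
    linarith
  have hw : w ⬝ᵥ (Q *ᵥ w) ≤ α₂ * (w ⬝ᵥ w) := by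
    simpa [smul_mulVec] using dotProduct_mulVec_le_of_posSemidef_sub hQ₂ w
  calc _ ≤ (1 + s) * ((A *ᵥ v) ⬝ᵥ (Q *ᵥ (A *ᵥ v))) + (1 + s⁻¹) * (w ⬝ᵥ (Q *ᵥ w)) :=
        hQ.dotProduct_add_mulVec_add_le _ _ hs
    _ ≤ _ := by
      rw [mul_assoc, mul_assoc]
      gcongr

end Matrix

theorem stmt14_general {m : ℕ} (Λ : ℕ → Matrix (Fin m) (Fin m) ℝ)
    (P : ℕ → Matrix (Fin m) (Fin m) ℝ)
    (α₁ α₂ α₃ : ℝ) (hα₁ : 0 < α₁) (hα₂ : 0 < α₂) (hα₃ : 0 < α₃)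
    (hP₁ : ∀ k, (P k - α₁ • (1 : Matrix (Fin m) (Fin m) ℝ)).PosSemidef)
    (hP₂ : ∀ k, (α₂ • (1 : Matrix (Fin m) (Fin m) ℝ) - P k).PosSemidef)
    (hLyap : ∀ k,
      (-(α₃ • (1 : Matrix (Fin m) (Fin m) ℝ)) - ((Λ k)ᵀ * P (k + 1) * Λ k - P k)).PosSemidef)
    (g : ℕ → EuclideanSpace ℝ (Fin m)) (hg : Tendsto g atTop (𝓝 0))
    (x : ℕ → EuclideanSpace ℝ (Fin m))
    (hx : ∀ k, x (k + 1) = (Λ k).mulVecE (x k) + g k) :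
    Tendsto x atTop (𝓝 0) := by
  have hP (k : ℕ) : (P k).PosSemidef := by
    simpa using (hP₁ k).add (PosSemidef.one.smul hα₁.le)
  set V : ℕ → ℝ := fun k => (x k).ofLp ⬝ᵥ (P k *ᵥ (x k).ofLp)
  set c := α₃ / α₂
  have hc : 0 < c := by positivity
  have hstep (k : ℕ) :
      V (k + 1) ≤ (1 + c / 2) * (1 - c) * V k + (1 + (c / 2)⁻¹) * α₂ * ‖g k‖ ^ 2 := by
    simpa [V, hx k, mulVecE, EuclideanSpace.ofLp_dotProduct_ofLp_self] using
      lyapunov_step hα₂ hα₃.le (half_pos hc) (hP (k + 1)) (hP₂ (k + 1)) (hP₂ k) (hLyap k)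
        (x k).ofLp (g k).ofLp
  -- with `s = c / 2` the rate is `1 - c / 2 - c ^ 2 / 2 < 1`
  have hV : Tendsto V atTop (𝓝 0) :=
    tendsto_zero_of_le_mul_add (by nlinarith)
      (fun k => by simpa using (hP k).dotProduct_mulVec_nonneg _) hstep
      (by simpa using (hg.norm.pow 2).const_mul _)
  have hlow (k : ℕ) : α₁ * ‖x k‖ ^ 2 ≤ V k := by
    simpa [smul_mulVec, EuclideanSpace.ofLp_dotProduct_ofLp_self] using
      dotProduct_mulVec_le_of_posSemidef_sub (hP₁ k) (x k).ofLp
  have hx_sq : Tendsto (fun k => ‖x k‖ ^ 2) atTop (𝓝 0) :=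
    squeeze_zero (fun k => by positivity) (fun k => (le_div_iff₀' hα₁).2 (hlow k))
      (by simpa using hV.div_const α₁)
  exact tendsto_zero_iff_norm_tendsto_zero.2 (by simpa using hx_sq.sqrt)

/-- a uniformly bounded time-varying linear system with a uniform
discrete Lyapunov certificate, driven by a vanishing input, has vanishing state. -/
theorem stmt14 {m : ℕ} (Λ : ℕ → Matrix (Fin m) (Fin m) ℝ)
    (hΛbound : ∃ B : ℝ, ∀ k, ‖Λ k‖ ≤ B)
    (P : ℕ → Matrix (Fin m) (Fin m) ℝ) (hPsymm : ∀ k, (P k)ᵀ = P k)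
    (α₁ α₂ α₃ : ℝ) (hα₁ : 0 < α₁) (hα₂ : 0 < α₂) (hα₃ : 0 < α₃)
    (hP₁ : ∀ k, (P k - α₁ • (1 : Matrix (Fin m) (Fin m) ℝ)).PosSemidef)
    (hP₂ : ∀ k, (α₂ • (1 : Matrix (Fin m) (Fin m) ℝ) - P k).PosSemidef)
    (hLyap : ∀ k,
      (-(α₃ • (1 : Matrix (Fin m) (Fin m) ℝ)) - ((Λ k)ᵀ * P (k + 1) * Λ k - P k)).PosSemidef)
    (g : ℕ → EuclideanSpace ℝ (Fin m)) (hg : Tendsto g atTop (𝓝 0))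
    (x : ℕ → EuclideanSpace ℝ (Fin m))
    (hx : ∀ k, x (k + 1) = (Λ k).mulVecE (x k) + g k) :
    Tendsto x atTop (𝓝 0) :=
  stmt14_general Λ P α₁ α₂ α₃ hα₁ hα₂ hα₃ hP₁ hP₂ hLyap g hg x hx
end

section
/- Let A ∈ ℝ^{n×n} and C ∈ ℝ^{p×n}, let 𝒪 = col(C, CA, …, CA^{n−1}) be the observability matrix and v = rank 𝒪. Let V_u ∈ ℝ^{n×(n−v)} have orthonormal columns spanning Ker 𝒪 and V_o ∈ ℝ^{n×v} have orthonormal columns spanning (Ker 𝒪)^⊥, so that V = [V_u V_o] is orthogonal. Then: (a) V_oᵀAV_u = 0, so VᵀAV has the block upper-triangular form [[V_uᵀAV_u, V_uᵀAV_o],[0, V_oᵀAV_o]]; (b) CV_u = 0, so CV = [0, CV_o]; and (c) the reduced pair (A_o, C_o) = (V_oᵀAV_o, CV_o) is observable, i.e., its observability matrct col(C_o, C_oA_o, …, C_oA_o^{v−1}) has rank v. -/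
open Matrix

/-- The observability matrix `col(C, CA, …, CA^{n−1})` of the pair `(A, C)`,
where `A` is `n × n`. -/
noncomputable def obsMat {n : ℕ} {q : Type*} (A : Matrix (Fin n) (Fin n) ℝ)
    (C : Matrix q (Fin n) ℝ) : Matrix (Fin n × q) (Fin n) ℝ :=
  Matrix.of fun r x => (C * A ^ (r.1 : ℕ)) r.2 x

lemma sum_mulVec' {m k ι : Type*} [Fintype k] (s : Finset ι) (f : ι → Matrix m k ℝ)
    (x : k → ℝ) : (∑ i ∈ s, f i) *ᵥ x = ∑ i ∈ s, f i *ᵥ x := by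
  funext j
  rw [Finset.sum_apply]
  simp only [mulVec, dotProduct, Matrix.sum_apply, Finset.sum_mul]
  rw [Finset.sum_comm]

/-- Cayley–Hamilton extension: if `D M^i x = 0` for `i < m`, then for all `i`. -/
lemma ch_ext {m : ℕ} {q : Type*} [Fintype q] (M : Matrix (Fin m) (Fin m) ℝ)
    (D : Matrix q (Fin m) ℝ) (x : Fin m → ℝ)
    (h : ∀ i < m, (D * M ^ i) *ᵥ x = 0) : ∀ i, (D * M ^ i) *ᵥ x = 0 := by
  rcases Nat.eq_zero_or_pos m with hm | hm
  · subst hm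
    have hx : x = 0 := Subsingleton.elim _ _
    intro i; rw [hx, Matrix.mulVec_zero]
  have hdeg : M.charpoly.natDegree = m := by
    simpa using M.charpoly_natDegree_eq_dim
  have hsum : ∑ i ∈ Finset.range (m + 1), M.charpoly.coeff i • M ^ i = 0 := by
    rw [← Polynomial.aeval_eq_sum_range' (by omega) M, M.aeval_self_charpoly]
  rw [Finset.sum_range_succ] at hsum
  have hlc : M.charpoly.coeff m = 1 := by
    have := M.charpoly_monic.coeff_natDegree; rwa [hdeg] at this
  rw [hlc, one_smul] at hsum
  have hMm : M ^ m = -∑ i ∈ Finset.range m, M.charpoly.coeff i • M ^ i :=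
    eq_neg_of_add_eq_zero_right hsum
  intro i
  induction i using Nat.strong_induction_on with
  | _ i ih =>
    rcases lt_or_ge i m with h' | h'
    · exact h i h'
    · have hpow : M ^ i = M ^ (i - m) * M ^ m := by
        rw [← pow_add]; congr 1; omega
      have expand : M ^ (i - m) * M ^ m
          = -∑ k ∈ Finset.range m, M.charpoly.coeff k • M ^ (i - m + k) := by
        rw [hMm, Matrix.mul_neg, Finset.mul_sum]
        congr 1
        refine Finset.sum_congr rfl fun k _ => ?_
        rw [mul_smul_comm, pow_add]
      rw [hpow, expand, Matrix.mul_neg, Matrix.neg_mulVec, neg_eq_zero,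
        Matrix.mul_sum, sum_mulVec']
      apply Finset.sum_eq_zero
      intro k hk
      have hk' : k < m := Finset.mem_range.mp hk
      rw [Matrix.mul_smul, smul_mulVec, ih (i - m + k) (by omega), smul_zero]

/-- Characterization of the kernel of the observability matrix. -/
lemma obs_ker_iff {m : ℕ} {q : Type*} [Fintype q] (M : Matrix (Fin m) (Fin m) ℝ)
    (D : Matrix q (Fin m) ℝ) (x : Fin m → ℝ) :
    obsMat M D *ᵥ x = 0 ↔ ∀ i, (D * M ^ i) *ᵥ x = 0 := by
  constructor
  · intro hx
    apply ch_ext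
    intro i hi
    funext j
    have := congrFun hx (⟨i, hi⟩, j)
    simpa [obsMat, mulVec, dotProduct] using this
  · intro hx
    funext r
    have := congrFun (hx r.1) r.2
    simpa [obsMat, mulVec, dotProduct] using this

lemma eq_zero_of_mulVec_single {m k : Type*} [Fintype k] [DecidableEq k]
    (M : Matrix m k ℝ) (h : ∀ j, M *ᵥ Pi.single j 1 = 0) : M = 0 := by
  ext i j
  have := congrFun (h j) i
  simpa [mulVec_single] using this

/-- Kalman observability decomposition: with `V_u` an orthonormal basis of
`Ker 𝒪` and `V_o` an orthonormal basis of `(Ker 𝒪)^⊥`, one has `V_oᵀAV_u = 0`, `CV_u = 0`,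
and the reduced pair `(V_oᵀAV_o, CV_o)` is observable. -/
theorem stmt16 {n p : ℕ} (A : Matrix (Fin n) (Fin n) ℝ) (C : Matrix (Fin p) (Fin n) ℝ)
    (v : ℕ) (hv : (obsMat A C).rank = v)
    (Vu : Matrix (Fin n) (Fin (n - v)) ℝ) (Vo : Matrix (Fin n) (Fin v) ℝ)
    (hVu_orth : Vuᵀ * Vu = 1)
    (hVu_span : LinearMap.range Vu.mulVecLin = LinearMap.ker (obsMat A C).mulVecLin)
    (hVo_orth : Voᵀ * Vo = 1)
    (hVo_span : (LinearMap.range Vo.mulVecLin : Set (Fin n → ℝ)) =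
      {x : Fin n → ℝ | ∀ y : Fin n → ℝ, (obsMat A C).mulVec y = 0 → x ⬝ᵥ y = 0}) :
    Voᵀ * A * Vu = 0 ∧ C * Vu = 0 ∧ (obsMat (Voᵀ * A * Vo) (C * Vo)).rank = v := by
  have hvn : v ≤ n := by
    have := (obsMat A C).rank_le_card_width
    simp only [Fintype.card_fin] at this
    omega
  -- A-invariance of the kernel of the observability matrix
  have hinv : ∀ x : Fin n → ℝ, obsMat A C *ᵥ x = 0 → obsMat A C *ᵥ (A *ᵥ x) = 0 := by
    intro x hx
    rw [obs_ker_iff] at hx ⊢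
    intro i
    rw [mulVec_mulVec, Matrix.mul_assoc, ← pow_succ]
    exact hx (i + 1)
  -- C kills the kernel
  have hCk : ∀ x : Fin n → ℝ, obsMat A C *ᵥ x = 0 → C *ᵥ x = 0 := by
    intro x hx
    have := (obs_ker_iff A C x).mp hx 0
    simpa using this
  -- columns of Vu lie in the kernel
  have hVuK : ∀ z : Fin (n - v) → ℝ, obsMat A C *ᵥ (Vu *ᵥ z) = 0 := by
    intro z
    have hmem : Vu.mulVecLin z ∈ LinearMap.range Vu.mulVecLin := ⟨z, rfl⟩
    rw [hVu_span] at hmem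
    simpa [mulVecLin_apply] using hmem
  -- columns of Vo are orthogonal to the kernel
  have hVoP : ∀ (z : Fin v → ℝ) (y : Fin n → ℝ), obsMat A C *ᵥ y = 0 →
      (Vo *ᵥ z) ⬝ᵥ y = 0 := by
    intro z y hy
    have hmem : Vo.mulVecLin z ∈ (LinearMap.range Vo.mulVecLin : Set (Fin n → ℝ)) :=
      ⟨z, rfl⟩
    rw [hVo_span] at hmem
    simpa [mulVecLin_apply] using hmem y hy
  -- Voᵀ kills the kernel
  have hVoT : ∀ y : Fin n → ℝ, obsMat A C *ᵥ y = 0 → Voᵀ *ᵥ y = 0 := by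
    intro y hy
    funext i
    have h1 := hVoP (Pi.single i 1) y hy
    have h2 : (Vo *ᵥ Pi.single i 1) ⬝ᵥ y = (Voᵀ *ᵥ y) i := by
      rw [mulVec_single]
      simp [dotProduct, mulVec, transpose_apply]
    rw [h2] at h1
    simpa using h1
  -- (b) C * Vu = 0
  have hCVu : C * Vu = 0 := by
    apply eq_zero_of_mulVec_single
    intro j
    rw [← mulVec_mulVec]
    exact hCk _ (hVuK _)
  -- (a) Voᵀ * A * Vu = 0
  have hVoAVu : Voᵀ * A * Vu = 0 := by
    apply eq_zero_of_mulVec_single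
    intro j
    rw [← mulVec_mulVec, ← mulVec_mulVec]
    exact hVoT _ (hinv _ (hVuK _))
  -- Voᵀ * Vu = 0 and Vuᵀ * Vo = 0
  have hVoVu : Voᵀ * Vu = 0 := by
    apply eq_zero_of_mulVec_single
    intro j
    rw [← mulVec_mulVec]
    exact hVoT _ (hVuK _)
  have hVuVo : Vuᵀ * Vo = 0 := by
    have := congrArg Matrix.transpose hVoVu
    simpa [transpose_mul, transpose_transpose] using this
  -- injectivity of Vu and Vo
  have hVuInj : ∀ z : Fin (n - v) → ℝ, Vu *ᵥ z = 0 → z = 0 := by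
    intro z hz
    have : (Vuᵀ * Vu) *ᵥ z = Vuᵀ *ᵥ (Vu *ᵥ z) := (mulVec_mulVec z Vuᵀ Vu).symm
    rw [hVu_orth, one_mulVec, hz, mulVec_zero] at this
    exact this
  have hVoInj : ∀ z : Fin v → ℝ, Vo *ᵥ z = 0 → z = 0 := by
    intro z hz
    have : (Voᵀ * Vo) *ᵥ z = Voᵀ *ᵥ (Vo *ᵥ z) := (mulVec_mulVec z Voᵀ Vo).symm
    rw [hVo_orth, one_mulVec, hz, mulVec_zero] at this
    exact this
  -- dimensions of the ranges
  have hkerVu : LinearMap.ker Vu.mulVecLin = ⊥ := by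
    ext z
    simp only [LinearMap.mem_ker, mulVecLin_apply, Submodule.mem_bot]
    exact ⟨hVuInj z, fun h => by rw [h, mulVec_zero]⟩
  have hkerVo : LinearMap.ker Vo.mulVecLin = ⊥ := by
    ext z
    simp only [LinearMap.mem_ker, mulVecLin_apply, Submodule.mem_bot]
    exact ⟨hVoInj z, fun h => by rw [h, mulVec_zero]⟩
  have hrVu : Module.finrank ℝ (LinearMap.range Vu.mulVecLin) = n - v := by
    have h1 := Vu.mulVecLin.finrank_range_add_finrank_ker
    rw [hkerVu, finrank_bot, add_zero, Module.finrank_fin_fun] at h1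
    exact h1
  have hrVo : Module.finrank ℝ (LinearMap.range Vo.mulVecLin) = v := by
    have h1 := Vo.mulVecLin.finrank_range_add_finrank_ker
    rw [hkerVo, finrank_bot, add_zero, Module.finrank_fin_fun] at h1
    exact h1
  -- the ranges intersect trivially
  have hinf : LinearMap.range Vu.mulVecLin ⊓ LinearMap.range Vo.mulVecLin = ⊥ := by
    rw [Submodule.eq_bot_iff]
    rintro x ⟨hxu, hxo⟩
    have hxker : obsMat A C *ᵥ x = 0 := by
      rw [hVu_span] at hxu
      simpa [mulVecLin_apply] using hxu
    obtain ⟨z, hz⟩ := hxo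
    have hx0 : x ⬝ᵥ x = 0 := by
      have := hVoP z x hxker
      rw [show Vo *ᵥ z = x by simpa [mulVecLin_apply] using hz] at this
      exact this
    exact dotProduct_self_eq_zero.mp hx0
  -- the ranges span everything
  have hsup : LinearMap.range Vu.mulVecLin ⊔ LinearMap.range Vo.mulVecLin = ⊤ := by
    apply Submodule.eq_top_of_finrank_eq
    have h1 := Submodule.finrank_sup_add_finrank_inf_eq
      (LinearMap.range Vu.mulVecLin) (LinearMap.range Vo.mulVecLin)
    rw [hinf, finrank_bot, add_zero, hrVu, hrVo] at h1
    rw [Module.finrank_fin_fun]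
    omega
  -- orthogonal decomposition of any vector
  have hdec : ∀ w : Fin n → ℝ, Vu *ᵥ (Vuᵀ *ᵥ w) + Vo *ᵥ (Voᵀ *ᵥ w) = w := by
    intro w
    have hw : w ∈ LinearMap.range Vu.mulVecLin ⊔ LinearMap.range Vo.mulVecLin := by
      rw [hsup]; trivial
    rcases Submodule.mem_sup.mp hw with ⟨a, ⟨ya, hya⟩, b, ⟨yb, hyb⟩, hab⟩
    simp only [mulVecLin_apply] at hya hyb
    subst hya hyb hab
    have h1 : Vuᵀ *ᵥ (Vu *ᵥ ya + Vo *ᵥ yb) = ya := by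
      rw [mulVec_add, mulVec_mulVec, mulVec_mulVec, hVu_orth, hVuVo, one_mulVec,
        zero_mulVec, add_zero]
    have h2 : Voᵀ *ᵥ (Vu *ᵥ ya + Vo *ᵥ yb) = yb := by
      rw [mulVec_add, mulVec_mulVec, mulVec_mulVec, hVo_orth, hVoVu, one_mulVec,
        zero_mulVec, zero_add]
    rw [h1, h2]
  -- kernel of reduced observability matrix is trivial
  have hredker : ∀ z : Fin v → ℝ,
      obsMat (Voᵀ * A * Vo) (C * Vo) *ᵥ z = 0 → z = 0 := by
    intro z hz
    rw [obs_ker_iff] at hz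
    -- relate powers of A to powers of the reduced matrix
    have key : ∀ i : ℕ, ∃ d : Fin n → ℝ, obsMat A C *ᵥ d = 0 ∧
        A ^ i *ᵥ (Vo *ᵥ z) = Vo *ᵥ ((Voᵀ * A * Vo) ^ i *ᵥ z) + d := by
      intro i
      induction i with
      | zero => exact ⟨0, by rw [mulVec_zero], by simp [one_mulVec]⟩
      | succ i ih =>
        obtain ⟨d, hd, hde⟩ := ih
        refine ⟨Vu *ᵥ (Vuᵀ *ᵥ (A *ᵥ (Vo *ᵥ ((Voᵀ * A * Vo) ^ i *ᵥ z)))) + A *ᵥ d,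
          ?_, ?_⟩
        · rw [mulVec_add, hVuK, hinv d hd, add_zero]
        · have hVow : Voᵀ *ᵥ (A *ᵥ (Vo *ᵥ ((Voᵀ * A * Vo) ^ i *ᵥ z)))
              = (Voᵀ * A * Vo) ^ (i + 1) *ᵥ z := by
            rw [mulVec_mulVec, mulVec_mulVec, mulVec_mulVec, ← pow_succ']
          calc A ^ (i + 1) *ᵥ (Vo *ᵥ z)
              = A *ᵥ (Vo *ᵥ ((Voᵀ * A * Vo) ^ i *ᵥ z)) + A *ᵥ d := by
                rw [pow_succ', ← mulVec_mulVec, hde, mulVec_add]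
            _ = (Vu *ᵥ (Vuᵀ *ᵥ (A *ᵥ (Vo *ᵥ ((Voᵀ * A * Vo) ^ i *ᵥ z))))
                  + Vo *ᵥ (Voᵀ *ᵥ (A *ᵥ (Vo *ᵥ ((Voᵀ * A * Vo) ^ i *ᵥ z)))))
                  + A *ᵥ d := by
                rw [hdec (A *ᵥ (Vo *ᵥ ((Voᵀ * A * Vo) ^ i *ᵥ z)))]
            _ = Vo *ᵥ ((Voᵀ * A * Vo) ^ (i + 1) *ᵥ z)
                  + (Vu *ᵥ (Vuᵀ *ᵥ (A *ᵥ (Vo *ᵥ ((Voᵀ * A * Vo) ^ i *ᵥ z))))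
                  + A *ᵥ d) := by
                rw [hVow]; abel
    have hxker : obsMat A C *ᵥ (Vo *ᵥ z) = 0 := by
      rw [obs_ker_iff]
      intro i
      obtain ⟨d, hd, hde⟩ := key i
      rw [← mulVec_mulVec, hde, mulVec_add, hCk d hd, add_zero, mulVec_mulVec,
        mulVec_mulVec]
      exact hz i
    have hVoz : Vo *ᵥ z = 0 := by
      apply dotProduct_self_eq_zero.mp
      exact hVoP z (Vo *ᵥ z) hxker
    exact hVoInj z hVoz
  refine ⟨hVoAVu, hCVu, ?_⟩
  -- rank of the reduced observability matrix
  have hkerbot : LinearMap.ker (obsMat (Voᵀ * A * Vo) (C * Vo)).mulVecLin = ⊥ := by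
    rw [Submodule.eq_bot_iff]
    intro z hzk
    exact hredker z (by simpa [mulVecLin_apply] using hzk)
  have h1 := (obsMat (Voᵀ * A * Vo) (C * Vo)).mulVecLin.finrank_range_add_finrank_ker
  rw [hkerbot, finrank_bot, add_zero, Module.finrank_fin_fun] at h1
  rw [Matrix.rank]
  exact h1
end
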